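/- Let x_1, ..., x_{m+1} be sampled i.i.d. from a distribution D over R^d. Then the probability that x_{m+1} is not in the linear span of x_1,...,x_m is at most d/(m+1). -/

import Mathlib

open MeasureTheory Finset
open scoped ENNReal

/-!
Call an index `j` essential for `x` if `x j ∉ span (x '' {j}ᶜ)` and new if
`x j ∉ span (x '' Iio j)`. Essential indices are new, and the new vectors are linearly
independent, so at most `d` indices are new; integrating, the probabilities that the indices are
new sum to at most `d`. By exchangeability all indices are essential with the same probability,
so `(m + 1) · P(last index essential) ≤ d`.
-/

section LinearAlgebra

variable {ι K E : Type*} [LinearOrder ι] [DivisionRing K] [AddCommGroup E] [Module K E]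

theorem linearIndepOn_of_notMem_span_image_Iio {x : ι → E} {T : Finset ι}
    (hT : ∀ j ∈ T, x j ∉ Submodule.span K (x '' Set.Iio j)) : LinearIndepOn K x (T : Set ι) := by
  induction T using Finset.induction_on_max with
  | empty => simp
  | insert a s ha ih =>
    have has : a ∉ (s : Set ι) := fun h => lt_irrefl a (ha a h)
    rw [coe_insert, linearIndepOn_insert has]
    refine ⟨ih fun j hj => hT j (mem_insert_of_mem hj), fun hmem => hT a (mem_insert_self a s) ?_⟩
    exact Submodule.span_mono (Set.image_mono ha) hmem

theorem card_le_finrank_of_notMem_span_image_Iio [FiniteDimensional K E] {x : ι → E}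
    {T : Finset ι} (hT : ∀ j ∈ T, x j ∉ Submodule.span K (x '' Set.Iio j)) :
    #T ≤ Module.finrank K E := by
  simpa using (linearIndepOn_of_notMem_span_image_Iio hT).fintype_card_le_finrank

end LinearAlgebra

theorem IsSigmaCompact.measurableSet {X : Type*} [TopologicalSpace X] [T2Space X]
    [MeasurableSpace X] [OpensMeasurableSpace X] {s : Set X} (hs : IsSigmaCompact s) :
    MeasurableSet s := by
  obtain ⟨K, hK, rfl⟩ := hs
  exact .iUnion fun n => (hK n).isClosed.measurableSet

section Measurability

variable {ι E : Type*} [Finite ι] [NormedAddCommGroup E] [NormedSpace ℝ E]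
  [FiniteDimensional ℝ E]

theorem isSigmaCompact_setOf_mem_span_image (s : Set ι) (j : ι) :
    IsSigmaCompact {x : ι → E | x j ∈ Submodule.span ℝ (x '' s)} := by
  have := Fintype.ofFinite s
  have hclosed : IsClosed {p : (s → ℝ) × (ι → E) | ∑ i, p.1 i • p.2 i = p.2 j} :=
    isClosed_eq (by fun_prop) (by fun_prop)
  convert (isSigmaCompact_univ.of_isClosed_subset hclosed (Set.subset_univ _)).image
    continuous_snd using 1
  ext x
  simp [Fintype.mem_span_image_iff_exists_fun]

theorem measurableSet_setOf_mem_span_image [MeasurableSpace E] [BorelSpace E] (s : Set ι)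
    (j : ι) :
    MeasurableSet {x : ι → E | x j ∈ Submodule.span ℝ (x '' s)} :=
  (isSigmaCompact_setOf_mem_span_image s j).measurableSet

end Measurability

section Exchangeability

variable {ι E : Type*} [Fintype ι] [MeasurableSpace E] (μ : Measure E) [SigmaFinite μ]

theorem measure_pi_preimage_comp_perm (σ : Equiv.Perm ι) (s : Set (ι → E)) :
    Measure.pi (fun _ => μ) ((· ∘ σ) ⁻¹' s) = Measure.pi (fun _ => μ) s := by
  have h := (measurePreserving_piCongrLeft (fun _ : ι => μ) σ.symm).measure_preimage_equiv s
  convert h using 3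
  ext x i
  simp [MeasurableEquiv.coe_piCongrLeft, Equiv.piCongrLeft_apply_eq_cast]

variable {K : Type*} [Semiring K] [AddCommMonoid E] [Module K E]

theorem measure_pi_notMem_span_image_compl_eq [DecidableEq ι] (j k : ι) :
    Measure.pi (fun _ => μ) {x : ι → E | x j ∉ Submodule.span K (x '' {j}ᶜ)} =
      Measure.pi (fun _ => μ) {x : ι → E | x k ∉ Submodule.span K (x '' {k}ᶜ)} := by
  rw [← measure_pi_preimage_comp_perm μ (Equiv.swap j k)]
  congr 1
  ext x
  have himage : (x ∘ Equiv.swap j k) '' {j}ᶜ = x '' {k}ᶜ := by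
    rw [Set.image_comp, Set.image_compl_eq (Equiv.swap j k).bijective, Set.image_singleton,
      Equiv.swap_apply_left]
  change (x ∘ Equiv.swap j k) j ∉ Submodule.span K ((x ∘ Equiv.swap j k) '' {j}ᶜ) ↔
    x k ∉ Submodule.span K (x '' {k}ᶜ)
  rw [himage, Function.comp_apply, Equiv.swap_apply_left]

end Exchangeability

section Counting

variable {ι E : Type*} [Fintype ι] [LinearOrder ι] [NormedAddCommGroup E] [NormedSpace ℝ E]
  [FiniteDimensional ℝ E] [MeasurableSpace E] [BorelSpace E]

theorem sum_measure_notMem_span_image_Iio_le (P : Measure (ι → E)) :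
    ∑ j, P {x | x j ∉ Submodule.span ℝ (x '' Set.Iio j)} ≤ Module.finrank ℝ E * P Set.univ := by
  classical
  set A : ι → Set (ι → E) := fun j => {x | x j ∉ Submodule.span ℝ (x '' Set.Iio j)}
  have hA : ∀ j, MeasurableSet (A j) := fun j => (measurableSet_setOf_mem_span_image _ j).compl
  have hcard : ∀ x, ∑ j, (A j).indicator 1 x ≤ (Module.finrank ℝ E : ℝ≥0∞) := fun x => by
    simp only [Set.indicator_apply, Pi.one_apply]
    rw [sum_boole, Nat.cast_le]
    exact card_le_finrank_of_notMem_span_image_Iio fun j hj => (mem_filter.1 hj).2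
  calc ∑ j, P (A j) = ∫⁻ x, ∑ j, (A j).indicator 1 x ∂P := by
        rw [lintegral_finsetSum _ fun j _ => measurable_one.indicator (hA j)]
        simp_rw [lintegral_indicator_one (hA _)]
    _ ≤ ∫⁻ _, (Module.finrank ℝ E : ℝ≥0∞) ∂P := lintegral_mono hcard
    _ = Module.finrank ℝ E * P Set.univ := lintegral_const _

theorem card_mul_measure_pi_notMem_span_image_compl_le (μ : Measure E) [IsProbabilityMeasure μ]
    (k : ι) :
    Fintype.card ι * Measure.pi (fun _ => μ) {x : ι → E | x k ∉ Submodule.span ℝ (x '' {k}ᶜ)} ≤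
      Module.finrank ℝ E := by
  set P := Measure.pi fun _ : ι => μ
  have hmono : ∀ j : ι, {x : ι → E | x j ∉ Submodule.span ℝ (x '' {j}ᶜ)} ⊆
      {x | x j ∉ Submodule.span ℝ (x '' Set.Iio j)} := fun j x hx hmem =>
    hx (Submodule.span_mono (Set.image_mono fun i hi => ne_of_lt hi) hmem)
  calc Fintype.card ι * P {x | x k ∉ Submodule.span ℝ (x '' {k}ᶜ)}
      = ∑ j, P {x | x j ∉ Submodule.span ℝ (x '' {j}ᶜ)} := by
        rw [sum_congr rfl fun j _ => measure_pi_notMem_span_image_compl_eq μ j k]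
        simp [P]
    _ ≤ ∑ j, P {x | x j ∉ Submodule.span ℝ (x '' Set.Iio j)} :=
        sum_le_sum fun j _ => measure_mono (hmono j)
    _ ≤ Module.finrank ℝ E * P Set.univ := sum_measure_notMem_span_image_Iio_le P
    _ = Module.finrank ℝ E := by simp [P]

end Counting

/-- Let x_1, ..., x_{m+1} be sampled i.i.d. from a distribution D over R^d. Then the
probability that x_{m+1} is not in the linear span of x_1,...,x_m is at most d/(m+1). -/
theorem prob_last_not_in_span_le (d m : ℕ) (D : Measure (Fin d → ℝ))
    [IsProbabilityMeasure D] :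
    (Measure.pi fun _ : Fin (m + 1) => D)
      {x : Fin (m + 1) → Fin d → ℝ |
        x (Fin.last m) ∉ Submodule.span ℝ (x '' {i : Fin (m + 1) | i < Fin.last m})}
      ≤ (d : ℝ≥0∞) / (m + 1) := by
  have hlast : {i : Fin (m + 1) | i < Fin.last m} = {Fin.last m}ᶜ := by
    ext i
    simp [Fin.lt_last_iff_ne_last]
  rw [hlast, ENNReal.le_div_iff_mul_le (by simp) (by simp), mul_comm]
  simpa using card_mul_measure_pi_notMem_span_image_compl_le D (Fin.last m)
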